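/- arXiv:math/0302190 — 2 statements merged into one kernel-verified Lean document; each statement's English description precedes it below -/
import Mathlib

section
/- Let (M,d) be a compact metric space which is totally disconnected, i.e., M contains no connected subset with at least two elements. Then for every η > 0 there is a δ > 0 such that every δ-connected subset of M has diameter less than or equal to η. -/
/-- `E` is `ε`-connected: any two points of `E` are joined by an `ε`-chain in `E`. -/
def IsEpsConnected {M : Type*} [MetricSpace M] (ε : ℝ) (E : Set M) : Prop :=
  ∀ x ∈ E, ∀ y ∈ E, ∃ (k : ℕ) (z : ℕ → M),
    (∀ i ≤ k, z i ∈ E) ∧ z 0 = x ∧ z k = y ∧ ∀ i < k, dist (z i) (z (i + 1)) < ε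

/-- If `M` is a compact, totally disconnected metric space, then for every `η > 0` there is
a `δ > 0` such that every `δ`-connected subset of `M` has diameter at most `η`. -/
theorem diam_le_of_eps_connected_of_totally_disconnected
    {M : Type*} [MetricSpace M] [CompactSpace M] [TotallyDisconnectedSpace M] :
    ∀ η : ℝ, 0 < η → ∃ δ : ℝ, 0 < δ ∧
      ∀ E : Set M, IsEpsConnected δ E → Metric.diam E ≤ η := by
  intro η hη
  have hbasis : TopologicalSpace.IsTopologicalBasis { s : Set M | IsClopen s } :=
    loc_compact_Haus_tot_disc_of_zero_dim
  -- for each x pick a clopen set V x with x ∈ V x ⊆ ball x (η/2)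
  have hV : ∀ x : M, ∃ V : Set M, IsClopen V ∧ x ∈ V ∧ V ⊆ Metric.ball x (η / 2) := by
    intro x
    obtain ⟨V, hVc, hxV, hVb⟩ := hbasis.exists_subset_of_mem_open
      (show x ∈ Metric.ball x (η / 2) from Metric.mem_ball_self (by linarith)) Metric.isOpen_ball
    exact ⟨V, hVc, hxV, hVb⟩
  choose V hVclopen hVmem hVball using hV
  -- each V x is compact and open, pick δ x with thickening (δ x) (V x) ⊆ V x
  have hδ : ∀ x : M, ∃ δ : ℝ, 0 < δ ∧ Metric.thickening δ (V x) ⊆ V x := fun x =>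
    ((hVclopen x).isClosed.isCompact).exists_thickening_subset_open (hVclopen x).isOpen
      (Set.Subset.refl _)
  choose δ hδpos hδsub using hδ
  -- cover M by finitely many V x
  obtain ⟨t, ht⟩ := isCompact_univ.elim_finite_subcover (fun x => V x)
    (fun x => (hVclopen x).isOpen) (fun x _ => Set.mem_iUnion.2 ⟨x, hVmem x⟩)
  rcases t.eq_empty_or_nonempty with rfl | htne
  · refine ⟨1, one_pos, fun E _ => ?_⟩
    have hE : E = ∅ := by
      ext x
      simp only [Set.mem_empty_iff_false, iff_false]
      intro hx
      have := ht (Set.mem_univ x)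
      simp at this
    rw [hE, Metric.diam_empty]; linarith
  · refine ⟨t.inf' htne δ, ?_, ?_⟩
    · exact (Finset.lt_inf'_iff htne).2 fun x _ => hδpos x
    · intro E hE
      refine Metric.diam_le_of_forall_dist_le hη.le fun x hx y hy => ?_
      obtain ⟨k, z, hzE, hz0, hzk, hstep⟩ := hE x hx y hy
      -- find the piece containing z 0
      obtain ⟨x₀, hx₀t, hx₀⟩ : ∃ x₀ ∈ t, z 0 ∈ V x₀ := by
        have := ht (Set.mem_univ (z 0))
        simpa using this
      -- all chain points stay in V x₀
      have hall : ∀ i ≤ k, z i ∈ V x₀ := by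
        intro i hi
        induction i with
        | zero => exact hx₀
        | succ n ih =>
          have hn : z n ∈ V x₀ := ih (Nat.le_of_succ_le hi)
          apply hδsub x₀
          rw [Metric.mem_thickening_iff]
          refine ⟨z n, hn, lt_of_lt_of_le (by rw [dist_comm]; exact hstep n (Nat.lt_of_succ_le hi)) ?_⟩
          exact Finset.inf'_le δ hx₀t
      have hxV : x ∈ V x₀ := hz0 ▸ hall 0 (Nat.zero_le k)
      have hyV : y ∈ V x₀ := hzk ▸ hall k le_rfl
      have h1 := hVball x₀ hxV
      have h2 := hVball x₀ hyV
      rw [Metric.mem_ball] at h1 h2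
      calc dist x y ≤ dist x x₀ + dist x₀ y := dist_triangle _ _ _
        _ = dist x x₀ + dist y x₀ := by rw [dist_comm x₀ y]
        _ ≤ η := by linarith
end

section
/- Let (M,d) be a separable metric space with topological dimension 0, meaning that for every x in M and every ε > 0 there is a clopen subset W of M with x ∈ W and W ⊆ B(x, ε). If F₁ and F₂ are disjoint closed subsets of M, then there exist clopen subsets V₁, V₂ of M such that F₁ ⊆ V₁, F₂ ⊆ V₂, V₁ ∩ V₂ = ∅, and V₁ ∪ V₂ = M. -/
/-- If `M` is a separable metric space of topological dimension `0` (every point has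
arbitrarily small clopen neighborhoods), and `F₁, F₂` are disjoint closed subsets of `M`,
then there are clopen sets `V₁ ⊇ F₁` and `V₂ ⊇ F₂` with `V₁ ∩ V₂ = ∅` and `V₁ ∪ V₂ = M`. -/
theorem exists_clopen_partition_of_dim_zero
    {M : Type*} [MetricSpace M] [TopologicalSpace.SeparableSpace M]
    (hdim : ∀ x : M, ∀ ε : ℝ, 0 < ε →
      ∃ W : Set M, IsClopen W ∧ x ∈ W ∧ W ⊆ Metric.ball x ε)
    (F₁ F₂ : Set M) (h₁ : IsClosed F₁) (h₂ : IsClosed F₂) (hdisj : F₁ ∩ F₂ = ∅) :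
    ∃ V₁ V₂ : Set M, IsClopen V₁ ∧ IsClopen V₂ ∧ F₁ ⊆ V₁ ∧ F₂ ⊆ V₂ ∧
      V₁ ∩ V₂ = ∅ ∧ V₁ ∪ V₂ = Set.univ := by
  classical
  rcases isEmpty_or_nonempty M with hM | hM
  · exact ⟨∅, ∅, isClopen_empty, isClopen_empty, fun x hx => (hM.false x).elim,
      fun x hx => (hM.false x).elim, by simp, Set.eq_univ_of_forall fun x => (hM.false x).elim⟩
  -- choose small clopen neighborhoods avoiding F₁ or F₂
  have hW : ∀ x : M, ∃ W : Set M, IsClopen W ∧ x ∈ W ∧ (W ∩ F₁ = ∅ ∨ W ∩ F₂ = ∅) := by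
    intro x
    have hx : x ∉ F₁ ∨ x ∉ F₂ := by
      by_contra h
      push_neg at h
      have : x ∈ F₁ ∩ F₂ := ⟨h.1, h.2⟩
      rw [hdisj] at this
      exact this
    rcases hx with hx | hx
    · rcases Metric.mem_nhds_iff.1 (h₁.isOpen_compl.mem_nhds hx) with ⟨ε, hε, hsub⟩
      rcases hdim x ε hε with ⟨Wx, hWc, hxW, hWb⟩
      refine ⟨Wx, hWc, hxW, Or.inl ?_⟩
      apply Set.eq_empty_iff_forall_notMem.2
      rintro y ⟨hy1, hy2⟩
      exact hsub (hWb hy1) hy2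
    · rcases Metric.mem_nhds_iff.1 (h₂.isOpen_compl.mem_nhds hx) with ⟨ε, hε, hsub⟩
      rcases hdim x ε hε with ⟨Wx, hWc, hxW, hWb⟩
      refine ⟨Wx, hWc, hxW, Or.inr ?_⟩
      apply Set.eq_empty_iff_forall_notMem.2
      rintro y ⟨hy1, hy2⟩
      exact hsub (hWb hy1) hy2
  choose W hWclopen hWmem hWor using hW
  -- countable subcover via Lindelöf
  haveI : SecondCountableTopology M := UniformSpace.secondCountable_of_separable M
  have hcover : (Set.univ : Set M) ⊆ ⋃ x, W x := fun x _ => Set.mem_iUnion.2 ⟨x, hWmem x⟩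
  obtain ⟨t, htc, hsub⟩ := isLindelof_univ.elim_countable_subcover W
    (fun x => (hWclopen x).isOpen) hcover
  have htne : t.Nonempty := by
    rcases hM with ⟨x⟩
    rcases Set.mem_iUnion₂.1 (hsub (Set.mem_univ x)) with ⟨y, hy, _⟩
    exact ⟨y, hy⟩
  obtain ⟨e, he⟩ := htc.exists_eq_range htne
  set U : ℕ → Set M := fun n => W (e n) with hU
  have hUcover : ∀ x : M, ∃ n, x ∈ U n := by
    intro x
    rcases Set.mem_iUnion₂.1 (hsub (Set.mem_univ x)) with ⟨y, hy, hxy⟩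
    rw [he] at hy
    rcases hy with ⟨n, rfl⟩
    exact ⟨n, hxy⟩
  have hUclopen : ∀ n, IsClopen (U n) := fun n => hWclopen (e n)
  set D : ℕ → Set M := fun n => U n \ ⋃ m ∈ Finset.range n, U m with hD
  have hDclopen : ∀ n, IsClopen (D n) := by
    intro n
    exact (hUclopen n).diff (isClopen_biUnion_finset (fun m _ => hUclopen m))
  have hDsub : ∀ n, D n ⊆ U n := fun n => Set.diff_subset
  have hDmem : ∀ x : M, x ∈ D (Nat.find (hUcover x)) := by
    intro x
    refine ⟨Nat.find_spec (hUcover x), ?_⟩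
    intro hx
    rcases Set.mem_iUnion₂.1 hx with ⟨m, hm, hxm⟩
    exact Nat.find_min (hUcover x) (Finset.mem_range.1 hm) hxm
  have hDdisj : ∀ m n, m ≠ n → D m ∩ D n = ∅ := by
    intro m n hmn
    apply Set.eq_empty_iff_forall_notMem.2
    rintro x ⟨hxm, hxn⟩
    rcases lt_or_gt_of_ne hmn with h | h
    · exact hxn.2 (Set.mem_iUnion₂.2 ⟨m, Finset.mem_range.2 h, hxm.1⟩)
    · exact hxm.2 (Set.mem_iUnion₂.2 ⟨n, Finset.mem_range.2 h, hxn.1⟩)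
  set P : ℕ → Prop := fun n => U n ∩ F₂ = ∅ with hP
  set V₁ : Set M := ⋃ (n : ℕ) (_ : P n), D n with hV₁
  set V₂ : Set M := ⋃ (n : ℕ) (_ : ¬ P n), D n with hV₂
  have hopen1 : IsOpen V₁ :=
    isOpen_iUnion fun n => isOpen_iUnion fun _ => (hDclopen n).isOpen
  have hopen2 : IsOpen V₂ :=
    isOpen_iUnion fun n => isOpen_iUnion fun _ => (hDclopen n).isOpen
  have hdisjV : V₁ ∩ V₂ = ∅ := by
    apply Set.eq_empty_iff_forall_notMem.2
    rintro x ⟨hx1, hx2⟩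
    rcases Set.mem_iUnion₂.1 hx1 with ⟨n, hn, hxn⟩
    rcases Set.mem_iUnion₂.1 hx2 with ⟨m, hm, hxm⟩
    have hne : n ≠ m := fun h => hm (h ▸ hn)
    exact Set.eq_empty_iff_forall_notMem.1 (hDdisj n m hne) x ⟨hxn, hxm⟩
  have hunionV : V₁ ∪ V₂ = Set.univ := by
    apply Set.eq_univ_of_forall
    intro x
    by_cases h : P (Nat.find (hUcover x))
    · exact Set.mem_union_left _ (Set.mem_iUnion₂.2 ⟨_, h, hDmem x⟩)
    · exact Set.mem_union_right _ (Set.mem_iUnion₂.2 ⟨_, h, hDmem x⟩)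
  have hc1 : V₁ = V₂ᶜ := by
    ext x
    constructor
    · intro hx hx2
      exact Set.eq_empty_iff_forall_notMem.1 hdisjV x ⟨hx, hx2⟩
    · intro hx
      rcases (Set.eq_univ_iff_forall.1 hunionV x) with h | h
      · exact h
      · exact absurd h hx
  have hc2 : V₂ = V₁ᶜ := by
    rw [hc1, compl_compl]
  refine ⟨V₁, V₂, ⟨hc1 ▸ hopen2.isClosed_compl, hopen1⟩,
    ⟨hc2 ▸ hopen1.isClosed_compl, hopen2⟩, ?_, ?_, hdisjV, hunionV⟩
  · intro x hx
    set n := Nat.find (hUcover x) with hn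
    have hxU : x ∈ U n := (hDmem x).1
    have : ¬ (U n ∩ F₁ = ∅) := fun h =>
      Set.eq_empty_iff_forall_notMem.1 h x ⟨hxU, hx⟩
    have hPn : P n := (hWor (e n)).resolve_left this
    exact Set.mem_iUnion₂.2 ⟨n, hPn, hDmem x⟩
  · intro x hx
    set n := Nat.find (hUcover x) with hn
    have hxU : x ∈ U n := (hDmem x).1
    have hPn : ¬ P n := fun h =>
      Set.eq_empty_iff_forall_notMem.1 h x ⟨hxU, hx⟩
    exact Set.mem_iUnion₂.2 ⟨n, hPn, hDmem x⟩
end
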